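/- arXiv:2405.01350 — 3 statements merged into one kernel-verified Lean document; each statement's English description precedes it below -/
import Mathlib

section
/- Let $n \in \mathbb{N}$, let $\mathbf{U} \in \mathbb{R}^{n \times n}$ be a matrix whose every column is a unit vector, i.e.\ $\sum_{l=1}^{n} U_{lk}^2 = 1$ for every $k$, let $\lambda_1,\dots,\lambda_n \in \mathbb{R}$, and let $i \neq j$ be indices in $\{1,\dots,n\}$. Then $\sum_{k=1}^{n} \big| (U_{ik} - U_{jk})^2 + (\lambda_k - 1)(U_{ik}^2 + U_{jk}^2) \big| \;\ge\; \|\mathbf{U}_{i\cdot} - \mathbf{U}_{j\cdot}\|_2^2 - \sum_{k=1}^{n} |\lambda_k - 1|$, where $\mathbf{U}_{i\cdot}$ denotes the $i$-th row of $\mathbf{U}$ and $\|\mathbf{U}_{i\cdot} - \mathbf{U}_{j\cdot}\|_2^2 = \sum_{k=1}^{n}(U_{ik}-U_{jk})^2$. -/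
open Matrix BigOperators

/-- Lower bound on the total absolute spectral change induced by a single edge
perturbation: `∑ₖ |(U_{ik} - U_{jk})² + (λₖ - 1)(U_{ik}² + U_{jk}²)|
  ≥ ‖U_{i·} - U_{j·}‖² - ∑ₖ |λₖ - 1|`. -/
theorem spectral_change_lower_bound
    (n : ℕ) (U : Matrix (Fin n) (Fin n) ℝ)
    (hU : ∀ k : Fin n, ∑ l : Fin n, (U l k) ^ 2 = 1)
    (lam : Fin n → ℝ) (i j : Fin n) (hij : i ≠ j) :
    (∑ k : Fin n, (U i k - U j k) ^ 2) - (∑ k : Fin n, |lam k - 1|) ≤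
      ∑ k : Fin n, |(U i k - U j k) ^ 2 + (lam k - 1) * ((U i k) ^ 2 + (U j k) ^ 2)| := by
  rw [← Finset.sum_sub_distrib]
  apply Finset.sum_le_sum
  intro k _
  have hsum : (U i k) ^ 2 + (U j k) ^ 2 ≤ 1 := by
    rw [← hU k]
    have := Finset.add_sum_erase Finset.univ (fun l => (U l k) ^ 2) (Finset.mem_univ i)
    calc (U i k) ^ 2 + (U j k) ^ 2
        ≤ (U i k) ^ 2 + ∑ l ∈ Finset.univ.erase i, (U l k) ^ 2 := by
          gcongr
          exact Finset.single_le_sum (f := fun l => (U l k) ^ 2)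
            (fun l _ => sq_nonneg _) (Finset.mem_erase.mpr ⟨(Ne.symm hij), Finset.mem_univ j⟩)
      _ = ∑ l : Fin n, (U l k) ^ 2 := this
  have h1 : |(lam k - 1) * ((U i k) ^ 2 + (U j k) ^ 2)| ≤ |lam k - 1| := by
    rw [abs_mul]
    calc |lam k - 1| * |(U i k) ^ 2 + (U j k) ^ 2| ≤ |lam k - 1| * 1 := by
          apply mul_le_mul_of_nonneg_left _ (abs_nonneg _)
          rw [abs_of_nonneg (by positivity)]
          exact hsum
      _ = |lam k - 1| := mul_one _
  have h2 : (U i k - U j k) ^ 2 - |(lam k - 1) * ((U i k) ^ 2 + (U j k) ^ 2)| ≤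
      |(U i k - U j k) ^ 2 + (lam k - 1) * ((U i k) ^ 2 + (U j k) ^ 2)| := by
    have := abs_add_le ((U i k - U j k) ^ 2 + (lam k - 1) * ((U i k) ^ 2 + (U j k) ^ 2))
      (-((lam k - 1) * ((U i k) ^ 2 + (U j k) ^ 2)))
    simp only [add_neg_cancel_right, abs_neg] at this
    have h3 : (U i k - U j k) ^ 2 ≤ |(U i k - U j k) ^ 2| := le_abs_self _
    linarith
  linarith
end

section
/- Let $\mathbf{B} \in \mathbb{R}^{n \times d}$, and let $\mathbf{D}_1 \in \mathbb{R}^{n \times n}$ and $\mathbf{D}_2 \in \mathbb{R}^{d \times d}$ be diagonal matrices with strictly positive diagonal entries. Define the block matrices $\mathbf{L} = \begin{bmatrix} \mathbf{D}_1 & -\mathbf{B} \\ -\mathbf{B}^{\top} & \mathbf{D}_2 \end{bmatrix}$ and $\mathbf{D} = \begin{bmatrix} \mathbf{D}_1 & \mathbf{0} \\ \mathbf{0} & \mathbf{D}_2 \end{bmatrix}$. Suppose $x \in \mathbb{R}^n$, $y \in \mathbb{R}^d$, and $\lambda \in \mathbb{R}$ satisfy the generalized eigenvalue equation $\mathbf{L}\begin{bmatrix}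 x \\ y \end{bmatrix} = \lambda\, \mathbf{D}\begin{bmatrix} x \\ y \end{bmatrix}$. Then, setting $u = \mathbf{D}_1^{1/2} x$ and $v = \mathbf{D}_2^{1/2} y$, the vectors $u$ and $v$ satisfy $\mathbf{D}_1^{-1/2}\mathbf{B}\mathbf{D}_2^{-1/2}\, v = (1-\lambda)\, u$ and $\mathbf{D}_2^{-1/2}\mathbf{B}^{\top}\mathbf{D}_1^{-1/2}\, u = (1-\lambda)\, v$; that is, $(u, v)$ is a singular-vector pair of the normalized matrix $\mathbf{D}_1^{-1/2}\mathbf{B}\mathbf{D}_2^{-1/2}$ with singular value $1 - \lambda$. -/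
open Matrix BigOperators

/-- Generalized eigenpairs of the bipartite-graph Laplacian give singular-vector pairs of
the normalized biadjacency matrix: if `L [x; y] = λ D [x; y]` with
`L = [[D₁, -B], [-Bᵀ, D₂]]` and `D = [[D₁, 0], [0, D₂]]`, then `u = D₁^{1/2} x` and
`v = D₂^{1/2} y` satisfy `D₁^{-1/2} B D₂^{-1/2} v = (1-λ) u` and
`D₂^{-1/2} Bᵀ D₁^{-1/2} u = (1-λ) v`. -/
theorem bipartite_laplacian_eigen_to_svd
    (n d : ℕ) (B : Matrix (Fin n) (Fin d) ℝ)
    (D1 : Fin n → ℝ) (D2 : Fin d → ℝ)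
    (hD1 : ∀ i, 0 < D1 i) (hD2 : ∀ j, 0 < D2 j)
    (x : Fin n → ℝ) (y : Fin d → ℝ) (lam : ℝ)
    (L D : Matrix (Fin n ⊕ Fin d) (Fin n ⊕ Fin d) ℝ)
    (hL : L = fromBlocks (diagonal D1) (-B) (-Bᵀ) (diagonal D2))
    (hD : D = fromBlocks (diagonal D1) 0 0 (diagonal D2))
    (heig : L.mulVec (Sum.elim x y) = lam • D.mulVec (Sum.elim x y))
    (u : Fin n → ℝ) (v : Fin d → ℝ)
    (hu : u = fun i => Real.sqrt (D1 i) * x i)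
    (hv : v = fun j => Real.sqrt (D2 j) * y j) :
    (diagonal (fun i => (Real.sqrt (D1 i))⁻¹) * B *
        diagonal (fun j => (Real.sqrt (D2 j))⁻¹)).mulVec v = (1 - lam) • u ∧
    (diagonal (fun j => (Real.sqrt (D2 j))⁻¹) * Bᵀ *
        diagonal (fun i => (Real.sqrt (D1 i))⁻¹)).mulVec u = (1 - lam) • v := by
  subst hL hD hu hv
  have hs1 : ∀ i, Real.sqrt (D1 i) ≠ 0 := fun i => (Real.sqrt_pos.2 (hD1 i)).ne'
  have hs2 : ∀ j, Real.sqrt (D2 j) ≠ 0 := fun j => (Real.sqrt_pos.2 (hD2 j)).ne'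
  have hsq1 : ∀ i, Real.sqrt (D1 i) * Real.sqrt (D1 i) = D1 i :=
    fun i => Real.mul_self_sqrt (hD1 i).le
  have hsq2 : ∀ j, Real.sqrt (D2 j) * Real.sqrt (D2 j) = D2 j :=
    fun j => Real.mul_self_sqrt (hD2 j).le
  have hBy : ∀ i, B.mulVec y i = (1 - lam) * (D1 i * x i) := by
    intro i
    have h := congrFun heig (Sum.inl i)
    simp [fromBlocks_mulVec, Matrix.neg_mulVec, Matrix.mulVec_diagonal] at h
    linarith
  have hBx : ∀ j, Bᵀ.mulVec x j = (1 - lam) * (D2 j * y j) := by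
    intro j
    have h := congrFun heig (Sum.inr j)
    simp [fromBlocks_mulVec, Matrix.neg_mulVec, Matrix.mulVec_diagonal] at h
    linarith
  have hCv : (diagonal (fun j => (Real.sqrt (D2 j))⁻¹)).mulVec
      (fun j => Real.sqrt (D2 j) * y j) = y := by
    funext j
    simp [Matrix.mulVec_diagonal, inv_mul_cancel_left₀ (hs2 j)]
  have hCu : (diagonal (fun i => (Real.sqrt (D1 i))⁻¹)).mulVec
      (fun i => Real.sqrt (D1 i) * x i) = x := by
    funext i
    simp [Matrix.mulVec_diagonal, inv_mul_cancel_left₀ (hs1 i)]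
  constructor
  · rw [← Matrix.mulVec_mulVec, ← Matrix.mulVec_mulVec, hCv]
    funext i
    simp only [Matrix.mulVec_diagonal, hBy i, Pi.smul_apply, smul_eq_mul]
    field_simp [hs1 i]
    linear_combination (lam - 1) * x i * hsq1 i
  · rw [← Matrix.mulVec_mulVec, ← Matrix.mulVec_mulVec, hCu]
    funext j
    simp only [Matrix.mulVec_diagonal, hBx j, Pi.smul_apply, smul_eq_mul]
    field_simp [hs2 j]
    linear_combination (lam - 1) * y j * hsq2 j
end

section
/- Let $n \in \mathbb{N}$ and let $\mathbf{W} \in \mathbb{R}^{n \times n}$ be symmetric with nonnegative entries. Let $x \in \{+1, -1\}^n$ define the partition $S_A = \{i : x_i = 1\}$ and $S_B = \{i : x_i = -1\}$; let $d_i = \sum_{j=1}^n W_{ij}$, $\mathbf{D} = \mathrm{diag}(d_1,\dots,d_n)$, and $\mathbf{L} = \mathbf{D} - \mathbf{W}$. Define $\mathrm{vol}(S_A) = \sum_{i \in S_A} d_i$, $\mathrm{vol}(S_B) = \sum_{i \in S_B} d_i$, and $\mathrm{cut}(S_A, S_B) = \sum_{i \in S_A}\sum_{j \in S_B} W_{ij}$,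 and assume $\mathrm{vol}(S_A) > 0$ and $\mathrm{vol}(S_B) > 0$. Set $b = \mathrm{vol}(S_A)/\mathrm{vol}(S_B)$ and define $y \in \mathbb{R}^n$ by $y_i = 1$ if $i \in S_A$ and $y_i = -b$ if $i \in S_B$. Then $y^{\top}\mathbf{D}y > 0$ and $\frac{y^{\top}\mathbf{L}y}{y^{\top}\mathbf{D}y} = \frac{\mathrm{cut}(S_A,S_B)}{\mathrm{vol}(S_A)} + \frac{\mathrm{cut}(S_A,S_B)}{\mathrm{vol}(S_B)}$, i.e.\ the Rayleigh quotient of $y$ equals the normalized cut $\mathrm{Ncut}(S_A, S_B)$. -/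
open Matrix BigOperators Finset

/-! The Laplacian quadratic form is `yᵀLy = ½ ∑ᵢⱼ Wᵢⱼ (yᵢ - yⱼ)²`, so for `y` equal to `1` on
`S_A` and `-b` on `S_B` only the cut edges contribute and `yᵀLy = (1 + b)² cut`, while
`yᵀDy = vol S_A + b² vol S_B`. The choice `b = vol S_A / vol S_B` makes the quotient collapse to
`cut (vol S_A + vol S_B) / (vol S_A vol S_B)`. -/

section

variable {ι R : Type*} [Fintype ι] [DecidableEq ι]

theorem two_mul_dotProduct_laplacian_mulVec [CommRing R] (W : Matrix ι ι R) (hW : W.IsSymm)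
    (y : ι → R) :
    2 * (y ⬝ᵥ (diagonal (fun i => ∑ j, W i j) - W) *ᵥ y) =
      ∑ i, ∑ j, W i j * (y i - y j) ^ 2 := by
  have hswap : ∑ i, ∑ j, W i j * y j ^ 2 = ∑ i, ∑ j, W i j * y i ^ 2 := by
    rw [Finset.sum_comm]
    exact sum_congr rfl fun i _ => sum_congr rfl fun j _ => by rw [hW.apply j i]
  have hform : y ⬝ᵥ (diagonal (fun i => ∑ j, W i j) - W) *ᵥ y =
      ∑ i, ∑ j, W i j * y i ^ 2 - ∑ i, ∑ j, W i j * y i * y j := by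
    rw [sub_mulVec, dotProduct_sub]
    simp only [dotProduct, mulVec_diagonal]
    simp only [mulVec, dotProduct, mul_sum, sum_mul]
    congr 1 <;> exact sum_congr rfl fun i _ => sum_congr rfl fun j _ => by ring
  calc 2 * (y ⬝ᵥ (diagonal (fun i => ∑ j, W i j) - W) *ᵥ y)
      = ∑ i, ∑ j, W i j * y i ^ 2 + ∑ i, ∑ j, W i j * y j ^ 2
          - 2 * ∑ i, ∑ j, W i j * y i * y j := by rw [hform, hswap]; ring
    _ = ∑ i, ∑ j, W i j * (y i - y j) ^ 2 := by
      simp only [mul_sum, ← sum_add_distrib, ← sum_sub_distrib]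
      exact sum_congr rfl fun i _ => sum_congr rfl fun j _ => by ring

theorem sum_mul_sq_sub_ite [CommRing R] (W : Matrix ι ι R) (hW : W.IsSymm) (s : Finset ι)
    (p q : R) :
    ∑ i, ∑ j, W i j * ((if i ∈ s then p else q) - (if j ∈ s then p else q)) ^ 2 =
      2 * (p - q) ^ 2 * ∑ i ∈ s, ∑ j ∈ sᶜ, W i j := by
  have hcomm : ∑ i ∈ sᶜ, ∑ j ∈ s, W i j = ∑ i ∈ s, ∑ j ∈ sᶜ, W i j :=
    Finset.sum_comm.trans (sum_congr rfl fun i _ => sum_congr rfl fun j _ => hW.apply i j)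
  have hconst : ∀ t u : Finset ι, ∀ c : R, (∀ i ∈ t, ∀ j ∈ u,
      ((if i ∈ s then p else q) - (if j ∈ s then p else q)) ^ 2 = c) →
      ∑ i ∈ t, ∑ j ∈ u, W i j * ((if i ∈ s then p else q) - (if j ∈ s then p else q)) ^ 2 =
        c * ∑ i ∈ t, ∑ j ∈ u, W i j := fun t u c h => by
    simp only [mul_sum]
    exact sum_congr rfl fun i hi => sum_congr rfl fun j hj => by rw [h i hi j hj, mul_comm]
  simp only [← sum_add_sum_compl s, sum_add_distrib]
  rw [hconst s s 0, hconst s sᶜ ((p - q) ^ 2), hconst sᶜ s ((p - q) ^ 2), hconst sᶜ sᶜ 0, hcomm]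
  · ring
  all_goals simp +contextual [sub_sq_comm]

theorem dotProduct_diagonal_mulVec_ite [CommSemiring R] (d : ι → R) (s : Finset ι) (p q : R) :
    (fun i => if i ∈ s then p else q) ⬝ᵥ diagonal d *ᵥ (fun i => if i ∈ s then p else q) =
      p ^ 2 * ∑ i ∈ s, d i + q ^ 2 * ∑ i ∈ sᶜ, d i := by
  simp only [dotProduct, mulVec_diagonal, ← sum_add_sum_compl s, mul_sum]
  congr 1
  · exact sum_congr rfl fun i hi => by rw [if_pos hi]; ring
  · exact sum_congr rfl fun i hi => by rw [if_neg (mem_compl.1 hi)]; ring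

theorem dotProduct_laplacian_mulVec_ite [Field R] [CharZero R] (W : Matrix ι ι R) (hW : W.IsSymm)
    (s : Finset ι) (p q : R) :
    (fun i => if i ∈ s then p else q) ⬝ᵥ
        (diagonal (fun i => ∑ j, W i j) - W) *ᵥ (fun i => if i ∈ s then p else q) =
      (p - q) ^ 2 * ∑ i ∈ s, ∑ j ∈ sᶜ, W i j := by
  have h := two_mul_dotProduct_laplacian_mulVec W hW (fun i => if i ∈ s then p else q)
  rw [sum_mul_sq_sub_ite W hW, mul_assoc] at h
  exact mul_left_cancel₀ two_ne_zero h

end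

theorem ncut_rayleigh_identity_general
    (n : ℕ) (W : Matrix (Fin n) (Fin n) ℝ)
    (hsymm : W.IsSymm)
    (x : Fin n → ℝ) (hx : ∀ i, x i = 1 ∨ x i = -1)
    (d : Fin n → ℝ) (hd : d = fun i => ∑ j : Fin n, W i j)
    (L : Matrix (Fin n) (Fin n) ℝ) (hL : L = diagonal d - W)
    (volA volB cut : ℝ)
    (hvolA : volA = ∑ i ∈ univ.filter (fun i => x i = 1), d i)
    (hvolB : volB = ∑ i ∈ univ.filter (fun i => x i = -1), d i)
    (hcut : cut = ∑ i ∈ univ.filter (fun i => x i = 1),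
        ∑ j ∈ univ.filter (fun j => x j = -1), W i j)
    (hvolApos : 0 < volA) (hvolBpos : 0 < volB)
    (b : ℝ) (hb : b = volA / volB)
    (y : Fin n → ℝ) (hy : y = fun i => if x i = 1 then (1:ℝ) else -b) :
    0 < y ⬝ᵥ (diagonal d).mulVec y ∧
      (y ⬝ᵥ L.mulVec y) / (y ⬝ᵥ (diagonal d).mulVec y) = cut / volA + cut / volB := by
  set s := univ.filter (fun i => x i = 1)
  have hcompl : univ.filter (fun i => x i = -1) = sᶜ := by
    ext i
    rcases hx i with h | h <;> norm_num [s, h]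
  have hy_ite : y = fun i => if i ∈ s then 1 else -b := by simp [hy, s]
  rw [hcompl] at hvolB hcut
  have hDy : y ⬝ᵥ (diagonal d).mulVec y = volA + b ^ 2 * volB := by
    rw [hy_ite, dotProduct_diagonal_mulVec_ite, hvolA, hvolB, one_pow, one_mul, neg_sq]
  have hLy : y ⬝ᵥ L.mulVec y = (1 + b) ^ 2 * cut := by
    rw [hy_ite, hL, hd, dotProduct_laplacian_mulVec_ite W hsymm, hcut, sub_neg_eq_add]
  have hDy_pos : 0 < y ⬝ᵥ (diagonal d).mulVec y := by
    rw [hDy]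
    positivity
  refine ⟨hDy_pos, ?_⟩
  rw [hLy, hDy, hb]
  field_simp

/-- Shi–Malik identity: for the indicator-based vector `y` (with `yᵢ = 1` on `S_A` and
`yᵢ = -b` on `S_B`, `b = vol(S_A)/vol(S_B)`), the Rayleigh quotient `yᵀLy / yᵀDy`
equals the normalized cut `cut/vol(S_A) + cut/vol(S_B)`, and `yᵀDy > 0`. -/
theorem ncut_rayleigh_identity
    (n : ℕ) (W : Matrix (Fin n) (Fin n) ℝ)
    (hsymm : W.IsSymm) (hnonneg : ∀ i j, 0 ≤ W i j)
    (x : Fin n → ℝ) (hx : ∀ i, x i = 1 ∨ x i = -1)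
    (d : Fin n → ℝ) (hd : d = fun i => ∑ j : Fin n, W i j)
    (L : Matrix (Fin n) (Fin n) ℝ) (hL : L = diagonal d - W)
    (volA volB cut : ℝ)
    (hvolA : volA = ∑ i ∈ univ.filter (fun i => x i = 1), d i)
    (hvolB : volB = ∑ i ∈ univ.filter (fun i => x i = -1), d i)
    (hcut : cut = ∑ i ∈ univ.filter (fun i => x i = 1),
        ∑ j ∈ univ.filter (fun j => x j = -1), W i j)
    (hvolApos : 0 < volA) (hvolBpos : 0 < volB)
    (b : ℝ) (hb : b = volA / volB)
    (y : Fin n → ℝ) (hy : y = fun i => if x i = 1 then (1:ℝ) else -b) :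
    0 < y ⬝ᵥ (diagonal d).mulVec y ∧
      (y ⬝ᵥ L.mulVec y) / (y ⬝ᵥ (diagonal d).mulVec y) = cut / volA + cut / volB :=
  ncut_rayleigh_identity_general n W hsymm x hx d hd L hL volA volB cut hvolA hvolB hcut hvolApos
    hvolBpos b hb y hy
end
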